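/- arXiv:2104.14071 — 4 statements merged into one kernel-verified Lean document; each statement's English description precedes it below -/
import Mathlib

section
/- If a measurable function g: [0,∞) → (0,∞) satisfies g(t + m(t)x)/g(t) → e^{-κx} for every x ∈ ℝ as t → ∞, where κ > 0 and m is a self-neglecting function (i.e., m(t + m(t)x)/m(t) → 1 locally uniformly in x), then the convergence g(t + m(t)x)/g(t) → e^{-κx} holds locally uniformly in x ∈ ℝ. -/
open Filter Topology MeasureTheory Set

/-!
Pass to `L = log g`; it suffices that `L (tₙ + m tₙ * xₙ) - L tₙ → -κ x₀` whenever `tₙ → ∞` and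
`xₙ → x₀`. Put `rₙ = tₙ + m tₙ * xₙ`; self-neglect gives `rₙ → ∞` and `m rₙ / m tₙ → 1`. By Egorov,
the pointwise convergence along `(tₙ)` and along `(rₙ)` is uniform off sets of small measure, so
for large `n` there is a `v` near `x₀` that is good for `tₙ` and such that
`w = (m tₙ / m rₙ) (v - xₙ)`, the point with `rₙ + m rₙ * w = tₙ + m tₙ * v`, is good for `rₙ`.
Comparing the two increments at this common point gives `L rₙ - L tₙ ≈ -κ (v - w) ≈ -κ x₀`.
-/

theorem TendstoUniformlyOn.tendsto_apply_of_eventually_mem {ι ι' α β : Type*} [UniformSpace β]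
    {F : ι → α → β} {b : β} {p : Filter ι} {s : Set α} (h : TendstoUniformlyOn F (fun _ => b) p s)
    {l : Filter ι'} {φ : ι' → ι} {u : ι' → α} (hφ : Tendsto φ l p) (hu : ∀ᶠ i in l, u i ∈ s) :
    Tendsto (fun i => F (φ i) (u i)) l (𝓝 b) :=
  tendsto_const_nhds.congr_uniformity <|
    (tendstoUniformlyOn_iff_tendsto.1 h).comp (hφ.prodMk (tendsto_principal.2 hu))

theorem tendstoLocallyUniformly_of_forall_tendsto_nhds {ι α β : Type*} [TopologicalSpace α]
    [UniformSpace β] {F : ι → α → β} {f : α → β} {p : Filter ι} (hf : Continuous f)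
    (h : ∀ x, Tendsto (fun q : ι × α => F q.1 q.2) (p ×ˢ 𝓝 x) (𝓝 (f x))) :
    TendstoLocallyUniformly F f p :=
  tendstoLocallyUniformly_iff_forall_tendsto.2 fun x =>
    (((hf.tendsto x).comp tendsto_snd).prodMk_nhds (h x)).mono_right (nhds_le_uniformity _)

theorem exists_mem_Icc_notMem_of_volume_lt {A B : Set ℝ} {a b ρ y α β : ℝ} (hρ : 0 < ρ)
    (hα : 0 ≤ α) (hβ : 0 ≤ β) (hA : volume A ≤ ENNReal.ofReal α)
    (hB : volume B ≤ ENNReal.ofReal β) (hlt : α + β / ρ < b - a) :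
    ∃ v ∈ Icc a b, v ∉ A ∧ ρ * (v - y) ∉ B := by
  by_contra! hcover
  have hsub : Icc a b ⊆ A ∪ (fun v => v + -y) ⁻¹' ((ρ * ·) ⁻¹' B) := fun v hv =>
    or_iff_not_imp_left.2 fun hvA => by simpa [sub_eq_add_neg] using hcover v hv hvA
  have hle : ENNReal.ofReal (b - a) ≤ ENNReal.ofReal (α + β / ρ) := calc
    ENNReal.ofReal (b - a) = volume (Icc a b) := Real.volume_Icc.symm
    _ ≤ volume A + ENNReal.ofReal ρ⁻¹ * volume B := by
      refine (measure_mono hsub).trans ((measure_union_le _ _).trans_eq ?_)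
      rw [measure_preimage_add_right, Real.volume_preimage_mul_left hρ.ne', abs_inv,
        abs_of_pos hρ]
    _ ≤ ENNReal.ofReal α + ENNReal.ofReal ρ⁻¹ * ENNReal.ofReal β := by gcongr
    _ = ENNReal.ofReal (α + β / ρ) := by
      rw [← ENNReal.ofReal_mul (by positivity), ← ENNReal.ofReal_add hα (by positivity),
        inv_mul_eq_div]
  rw [ENNReal.ofReal_le_ofReal_iff (by positivity)] at hle
  linarith

theorem exists_volume_le_tendstoUniformlyOn_Icc_diff {L m : ℝ → ℝ} {c : ℝ} (hL : Measurable L)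
    (hLc : ∀ x, Tendsto (fun t => L (t + m t * x) - L t) atTop (𝓝 (c * x))) {s : ℕ → ℝ}
    (hs : Tendsto s atTop atTop) (a b : ℝ) {ε : ℝ} (hε : 0 < ε) :
    ∃ A, volume A ≤ ENNReal.ofReal ε ∧
      TendstoUniformlyOn (fun n v => L (s n + m (s n) * v) - L (s n) - c * v) (fun _ => 0)
        atTop (Icc a b \ A) := by
  obtain ⟨A, -, -, hA, hunif⟩ := tendstoUniformlyOn_of_ae_tendsto (μ := volume)
    (fun n => (by fun_prop : Measurable fun v => L (s n + m (s n) * v) - L (s n) - c * v)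
      |>.stronglyMeasurable) stronglyMeasurable_const measurableSet_Icc
    measure_Icc_lt_top.ne (ae_of_all _ fun v _ => by
      simpa using ((hLc v).comp hs).sub_const (c * v)) hε
  exact ⟨A, hA, hunif⟩

def IsSelfNeglecting (m : ℝ → ℝ) : Prop :=
  ∀ K : Set ℝ, IsCompact K →
    TendstoUniformlyOn (fun t x => m (t + m t * x) / m t) (fun _ => 1) atTop K

namespace IsSelfNeglecting

section

variable {m : ℝ → ℝ} (hm : IsSelfNeglecting m)
include hm

theorem eventually_le_mul (hm_pos : ∀ t, 0 < m t) {c : ℝ} (hc : 0 < c) :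
    ∀ᶠ t in atTop, m t ≤ c * t := by
  have hU := Metric.tendstoUniformlyOn_iff.1 (hm (Icc (-c⁻¹) 0) isCompact_Icc) (1 / 2) one_half_pos
  filter_upwards [hU, eventually_gt_atTop (2 * m 0 / c)] with t hUt ht
  by_contra! hlt
  have htpos : 0 < t := lt_trans (by have := hm_pos 0; positivity) ht
  -- at `x = -t / m t` the shifted point is `0`, so `m 0` is comparable to `m t`
  have hx : -(t / m t) ∈ Icc (-c⁻¹) 0 := by
    refine ⟨neg_le_neg ?_, neg_nonpos.2 (div_pos htpos (hm_pos t)).le⟩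
    rw [div_le_iff₀ (hm_pos t), inv_mul_eq_div, le_div_iff₀ hc]
    linarith
  have hclose := hUt _ hx
  rw [show t + m t * -(t / m t) = 0 by field_simp [(hm_pos t).ne']; ring, Real.dist_eq,
    abs_lt] at hclose
  rw [div_lt_iff₀ hc] at ht
  have : m t < 2 * m 0 := by
    have := hclose.2
    rw [sub_lt_iff_lt_add, ← sub_lt_iff_lt_add', lt_div_iff₀ (hm_pos t)] at this
    linarith
  linarith

theorem tendsto_add_mul_atTop (hm_pos : ∀ t, 0 < m t) {α : Type*} {l : Filter α} {t x : α → ℝ}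
    {x₀ : ℝ} (ht : Tendsto t l atTop) (hx : Tendsto x l (𝓝 x₀)) :
    Tendsto (fun i => t i + m (t i) * x i) l atTop := by
  set C := |x₀| + 1
  have hC : 0 < C := by positivity
  have hxC : ∀ᶠ i in l, |x i| ≤ C :=
    (hx.abs.eventually (gt_mem_nhds (lt_add_one |x₀|))).mono fun _ h => h.le
  refine tendsto_atTop_mono' l ?_ (ht.atTop_div_const two_pos)
  filter_upwards [ht.eventually (hm.eventually_le_mul hm_pos (c := (2 * C)⁻¹) (by positivity)),
    hxC] with i hmi hxi
  have : m (t i) * |x i| ≤ t i / 2 := calc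
    m (t i) * |x i| ≤ (2 * C)⁻¹ * t i * C :=
      mul_le_mul hmi hxi (abs_nonneg _) ((hm_pos _).le.trans hmi)
    _ = t i / 2 := by field_simp
  nlinarith [neg_abs_le (x i), hm_pos (t i)]

theorem tendsto_div {α : Type*} {l : Filter α} {t x : α → ℝ} {x₀ : ℝ} (ht : Tendsto t l atTop)
    (hx : Tendsto x l (𝓝 x₀)) :
    Tendsto (fun i => m (t i + m (t i) * x i) / m (t i)) l (𝓝 1) :=
  (hm _ (isCompact_closedBall x₀ 1)).tendsto_apply_of_eventually_mem ht
    (hx.eventually (Metric.closedBall_mem_nhds x₀ one_pos))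

end

variable {m L : ℝ → ℝ} {c : ℝ} (hm_pos : ∀ t, 0 < m t) (hm : IsSelfNeglecting m)
  (hL : Measurable L) (hLc : ∀ x, Tendsto (fun t => L (t + m t * x) - L t) atTop (𝓝 (c * x)))
include hm_pos hm hL hLc

theorem tendsto_sub_of_seq {t x : ℕ → ℝ} {x₀ : ℝ} (ht : Tendsto t atTop atTop)
    (hx : Tendsto x atTop (𝓝 x₀)) :
    Tendsto (fun n => L (t n + m (t n) * x n) - L (t n)) atTop (𝓝 (c * x₀)) := by
  set r := fun n => t n + m (t n) * x n
  set ρ := fun n => m (t n) / m (r n)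
  have hr : Tendsto r atTop atTop := hm.tendsto_add_mul_atTop hm_pos ht hx
  have hρ : Tendsto ρ atTop (𝓝 1) := by
    simpa [ρ, inv_div] using (hm.tendsto_div ht hx).inv₀ one_ne_zero
  obtain ⟨A, hA, hunifA⟩ := exists_volume_le_tendstoUniformlyOn_Icc_diff hL hLc ht
    (x₀ - 1) (x₀ + 1) (by norm_num : (0 : ℝ) < 1 / 4)
  obtain ⟨B, hB, hunifB⟩ := exists_volume_le_tendstoUniformlyOn_Icc_diff hL hLc hr
    (-3) 3 (by norm_num : (0 : ℝ) < 1 / 4)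
  have hgood : ∀ᶠ n in atTop, ∃ v, v ∈ Icc (x₀ - 1) (x₀ + 1) \ A ∧ |v - x n| ≤ 3 / 2 ∧
      ρ n * (v - x n) ∈ Icc (-3) 3 \ B := by
    filter_upwards [hρ.eventually (Icc_mem_nhds one_half_lt_one one_lt_two),
      hx.eventually (Metric.ball_mem_nhds x₀ one_half_pos)] with n ⟨hρ₁, hρ₂⟩ hxn
    rw [Real.dist_eq, abs_lt] at hxn
    obtain ⟨v, hvI, hvA, hvB⟩ := exists_mem_Icc_notMem_of_volume_lt (y := x n)
      (by linarith) (by norm_num) (by norm_num) hA hB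
      (show 1 / 4 + 1 / 4 / ρ n < x₀ + 1 - (x₀ - 1) by
        have : 1 / 4 / ρ n ≤ 1 / 2 := by rw [div_le_iff₀ (by linarith)]; linarith
        linarith)
    have hvx : |v - x n| ≤ 3 / 2 := abs_le.2 ⟨by linarith [hvI.1], by linarith [hvI.2]⟩
    refine ⟨v, ⟨hvI, hvA⟩, hvx, ⟨abs_le.1 ?_, hvB⟩⟩
    rw [abs_mul, abs_of_pos (by linarith)]
    nlinarith [abs_nonneg (v - x n)]
  obtain ⟨v, hv⟩ := hgood.choice
  set w := fun n => ρ n * (v n - x n)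
  have hvt : Tendsto (fun n => L (t n + m (t n) * v n) - L (t n) - c * v n) atTop (𝓝 0) :=
    hunifA.tendsto_apply_of_eventually_mem tendsto_id (hv.mono fun _ h => h.1)
  have hwr : Tendsto (fun n => L (r n + m (r n) * w n) - L (r n) - c * w n) atTop (𝓝 0) :=
    hunifB.tendsto_apply_of_eventually_mem tendsto_id (hv.mono fun _ h => h.2.2)
  have hvw : Tendsto (fun n => (1 - ρ n) * (v n - x n) + x n) atTop (𝓝 x₀) := by
    have h1ρ : Tendsto (fun n => 1 - ρ n) atTop (𝓝 0) := by
      simpa using (tendsto_const_nhds (x := (1 : ℝ))).sub hρ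
    simpa using (h1ρ.zero_mul_isBoundedUnder_le
      (isBoundedUnder_of_eventually_le (hv.mono fun _ h => h.2.1))).add hx
  have hmeet : ∀ n, r n + m (r n) * w n = t n + m (t n) * v n := fun n => by
    simp only [w, ρ]
    field_simp [(hm_pos (r n)).ne']
    ring
  refine ((hvt.sub hwr).add (hvw.const_mul c)).congr' (Eventually.of_forall fun n => ?_)
    |>.trans_eq (by simp)
  simp only [hmeet, w]
  ring

theorem tendsto_sub_nhds (x₀ : ℝ) :
    Tendsto (fun q : ℝ × ℝ => L (q.1 + m q.1 * q.2) - L q.1) (atTop ×ˢ 𝓝 x₀) (𝓝 (c * x₀)) :=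
  tendsto_iff_seq_tendsto.2 fun _ hu =>
    tendsto_sub_of_seq hm_pos hm hL hLc (tendsto_prod_iff'.1 hu).1 (tendsto_prod_iff'.1 hu).2

end IsSelfNeglecting

theorem rapid_variation_stmt0_general (g m : ℝ → ℝ) (κ : ℝ)
    (hg_meas : Measurable g) (hg_pos : ∀ t, 0 < g t) (hm_pos : ∀ t, 0 < m t)
    (hm : ∀ K : Set ℝ, IsCompact K →
      TendstoUniformlyOn (fun t x => m (t + m t * x) / m t) (fun _ => 1) atTop K)
    (hg : ∀ x : ℝ, Tendsto (fun t => g (t + m t * x) / g t) atTop (𝓝 (Real.exp (-κ * x)))) :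
    ∀ K : Set ℝ, IsCompact K →
      TendstoUniformlyOn (fun t x => g (t + m t * x) / g t)
        (fun x => Real.exp (-κ * x)) atTop K := by
  have hlog (x : ℝ) : Tendsto (fun t => Real.log (g (t + m t * x)) - Real.log (g t)) atTop
      (𝓝 (-κ * x)) := by
    have := (Real.continuousAt_log (Real.exp_pos _).ne').tendsto.comp (hg x)
    rw [Real.log_exp] at this
    exact this.congr fun t => Real.log_div (hg_pos _).ne' (hg_pos _).ne'
  rw [← tendstoLocallyUniformly_iff_forall_isCompact]
  refine tendstoLocallyUniformly_of_forall_tendsto_nhds (by fun_prop) fun x₀ => ?_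
  refine ((Real.continuous_exp.tendsto _).comp
    (IsSelfNeglecting.tendsto_sub_nhds hm_pos hm hg_meas.log hlog x₀)).congr fun q => ?_
  simp [Real.exp_sub, Real.exp_log (hg_pos _)]

/-- If `g ∈ Γ_{-κ}(m)` (pointwise) with `m` self-neglecting (locally uniformly),
then the convergence `g(t + m(t)x)/g(t) → e^{-κx}` is locally uniform in `x`. -/
theorem rapid_variation_stmt0 (g m : ℝ → ℝ) (κ : ℝ) (hκ : 0 < κ)
    (hg_meas : Measurable g) (hg_pos : ∀ t, 0 < g t) (hm_pos : ∀ t, 0 < m t)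
    (hm : ∀ K : Set ℝ, IsCompact K →
      TendstoUniformlyOn (fun t x => m (t + m t * x) / m t) (fun _ => 1) atTop K)
    (hg : ∀ x : ℝ, Tendsto (fun t => g (t + m t * x) / g t) atTop (𝓝 (Real.exp (-κ * x)))) :
    ∀ K : Set ℝ, IsCompact K →
      TendstoUniformlyOn (fun t x => g (t + m t * x) / g t)
        (fun x => Real.exp (-κ * x)) atTop K :=
  rapid_variation_stmt0_general g m κ hg_meas hg_pos hm_pos hm hg
end

section
/- Let m be a continuous, positive, self-neglecting function with differentiable representative whose derivative tends to 0. Then for each fixed x ∈ ℝ, m(t + m(t)x)/m(t) → 1 as t → ∞, and this convergence is locally uniform in x (Bloom's theorem). -/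
/-!
Since `m' → 0`, the mean value theorem makes `m` eventually `ε`-Lipschitz for every `ε > 0`;
in particular `m(t) = o(t)`. So for `|x| ≤ R` both `t` and `t + m(t)x` eventually lie in the
region where `|m'| ≤ ε`, whence `|m(t + m(t)x) - m(t)| ≤ ε m(t) R`, uniformly in `x`.
-/

open Filter Topology

section

variable {E : Type*} [NormedAddCommGroup E] [NormedSpace ℝ E] {f f' : ℝ → E}

theorem exists_forall_norm_sub_le_of_tendsto_deriv_zero
    (hf : ∀ᶠ t in atTop, HasDerivAt f (f' t) t) (hf' : Tendsto f' atTop (𝓝 0))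
    {ε : ℝ} (hε : 0 < ε) : ∃ T, ∀ x ≥ T, ∀ y ≥ T, ‖f y - f x‖ ≤ ε * |y - x| := by
  have hsmall : ∀ᶠ t in atTop, ‖f' t‖ ≤ ε := by
    simpa only [dist_zero_right] using (Metric.tendsto_nhds.mp hf' ε hε).mono fun _ h => h.le
  obtain ⟨T, hT⟩ := (hf.and hsmall).exists_forall_of_atTop
  refine ⟨T, fun x hx y hy => ?_⟩
  exact (convex_Ici T).norm_image_sub_le_of_norm_hasDerivWithin_le
    (fun s hs => (hT s hs).1.hasDerivWithinAt) (fun s hs => (hT s hs).2) hx hy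

theorem isLittleO_id_of_tendsto_deriv_zero
    (hf : ∀ᶠ t in atTop, HasDerivAt f (f' t) t) (hf' : Tendsto f' atTop (𝓝 0)) :
    f =o[atTop] id := by
  refine Asymptotics.isLittleO_iff.mpr fun c hc => ?_
  obtain ⟨T, hT⟩ := exists_forall_norm_sub_le_of_tendsto_deriv_zero hf hf' (half_pos hc)
  set T₀ := max T 0
  filter_upwards [eventually_ge_atTop T₀, eventually_ge_atTop (2 * ‖f T₀‖ / c)] with t ht hlarge
  have hT₀ : 0 ≤ T₀ := le_max_right T 0
  have hlip := hT T₀ (le_max_left T 0) t (le_max_left T 0 |>.trans ht)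
  have hnorm : ‖f t‖ ≤ ‖f T₀‖ + ‖f t - f T₀‖ := norm_le_norm_add_norm_sub' (f t) (f T₀)
  rw [abs_of_nonneg (sub_nonneg.mpr ht)] at hlip
  rw [div_le_iff₀ hc] at hlarge
  rw [id, Real.norm_of_nonneg (hT₀.trans ht)]
  nlinarith

theorem eventually_forall_le_add_mul_of_isLittleO {h : ℝ → ℝ} (hh : h =o[atTop] id) (T R : ℝ) :
    ∀ᶠ t in atTop, ∀ x, |x| ≤ R → T ≤ t + h t * x := by
  have hR : 0 < 2 * (|R| + 1) := by positivity
  filter_upwards [hh.bound (one_div_pos.mpr hR), eventually_ge_atTop (2 * T),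
    eventually_ge_atTop 0] with t hbound hT ht x hx
  rw [id, Real.norm_eq_abs, Real.norm_of_nonneg ht] at hbound
  have : |h t * x| ≤ t / 2 := by
    rw [abs_mul]
    calc |h t| * |x| ≤ 1 / (2 * (|R| + 1)) * t * (|R| + 1) := by
          gcongr; linarith [le_abs_self R]
      _ = t / 2 := by field_simp
  linarith [neg_abs_le (h t * x)]

theorem tendstoUniformlyOn_smul_sub_of_tendsto_deriv_zero {h : ℝ → ℝ}
    (hf : ∀ᶠ t in atTop, HasDerivAt f (f' t) t) (hf' : Tendsto f' atTop (𝓝 0))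
    (hh : h =o[atTop] id) {K : Set ℝ} (hK : Bornology.IsBounded K) :
    TendstoUniformlyOn (fun t x => (h t)⁻¹ • (f (t + h t * x) - f t)) 0 atTop K := by
  obtain ⟨R, hR, hKR⟩ := hK.subset_closedBall_lt 0 0
  rw [Metric.tendstoUniformlyOn_iff]
  intro ε hε
  obtain ⟨T, hT⟩ := exists_forall_norm_sub_le_of_tendsto_deriv_zero hf hf'
    (div_pos hε (mul_pos two_pos hR))
  filter_upwards [eventually_ge_atTop T, eventually_forall_le_add_mul_of_isLittleO hh T R]
    with t ht hshift x hx
  have hxR : |x| ≤ R := by simpa using hKR hx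
  have hlip := hT t ht _ (hshift x hxR)
  rw [add_sub_cancel_left, abs_mul] at hlip
  calc dist 0 ((h t)⁻¹ • (f (t + h t * x) - f t))
      = |h t|⁻¹ * ‖f (t + h t * x) - f t‖ := by
        rw [dist_zero_left, norm_smul, Real.norm_eq_abs, abs_inv]
    _ ≤ |h t|⁻¹ * (ε / (2 * R) * (|h t| * R)) := by gcongr; exact hlip.trans (by gcongr)
    _ = (|h t|⁻¹ * |h t|) * (ε / 2) := by field_simp
    _ ≤ ε / 2 :=
      mul_le_of_le_one_left (by positivity) (inv_mul_le_one_of_le₀ le_rfl (abs_nonneg _))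
    _ < ε := half_lt_self hε

end

theorem rapid_variation_stmt1_general (m m' : ℝ → ℝ)
    (hm_pos : ∀ t, 0 < m t)
    (hm_deriv : ∀ t, HasDerivAt m (m' t) t)
    (hm_d0 : Tendsto m' atTop (𝓝 0)) :
    (∀ x : ℝ, Tendsto (fun t => m (t + m t * x) / m t) atTop (𝓝 1)) ∧
    (∀ K : Set ℝ, IsCompact K →
      TendstoUniformlyOn (fun t x => m (t + m t * x) / m t) (fun _ => 1) atTop K) := by
  have hm_deriv' : ∀ᶠ t in atTop, HasDerivAt m (m' t) t := Eventually.of_forall hm_deriv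
  have hm_small : m =o[atTop] id := isLittleO_id_of_tendsto_deriv_zero hm_deriv' hm_d0
  have uniform : ∀ K : Set ℝ, IsCompact K →
      TendstoUniformlyOn (fun t x => m (t + m t * x) / m t) (fun _ => 1) atTop K := by
    intro K hK
    have hquot := tendstoUniformlyOn_smul_sub_of_tendsto_deriv_zero hm_deriv' hm_d0 hm_small
      hK.isBounded
    rw [Metric.tendstoUniformlyOn_iff] at hquot ⊢
    intro ε hε
    filter_upwards [hquot ε hε] with t ht x hx
    convert ht x hx using 1
    have := (hm_pos t).ne'
    rw [dist_comm, dist_eq_norm, Pi.zero_apply, dist_zero_left, smul_eq_mul, Real.norm_eq_abs,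
      Real.norm_eq_abs]
    congr 1
    field_simp
  exact ⟨fun x => (uniform {x} isCompact_singleton).tendsto_at (Set.mem_singleton x), uniform⟩

/-- Bloom's theorem: if `m` is continuous, positive, with a derivative tending to `0`
(and `m(t)/t → 0`), then `m(t + m(t)x)/m(t) → 1` for each `x`, and the convergence
is locally uniform in `x`. -/
theorem rapid_variation_stmt1 (m m' : ℝ → ℝ)
    (hm_cont : Continuous m) (hm_pos : ∀ t, 0 < m t)
    (hm_deriv : ∀ t, HasDerivAt m (m' t) t)
    (hm_d0 : Tendsto m' atTop (𝓝 0))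
    (hm_small : Tendsto (fun t => m t / t) atTop (𝓝 0)) :
    (∀ x : ℝ, Tendsto (fun t => m (t + m t * x) / m t) atTop (𝓝 1)) ∧
    (∀ K : Set ℝ, IsCompact K →
      TendstoUniformlyOn (fun t x => m (t + m t * x) / m t) (fun _ => 1) atTop K) :=
  rapid_variation_stmt1_general m m' hm_pos hm_deriv hm_d0
end

section
/- If a continuous density f on ℝ satisfies f(t + m(t)x) ~ f(t)e^{-x} as t → ∞ for all x ∈ ℝ, where m is self-neglecting, differentiable with derivative tending to 0, then the survival function F̄(t) = ∫_t^∞ f(s) ds satisfies F̄(t + m(t)x) ~ F̄(t)e^{-x} locally uniformly in x ∈ ℝ as t → ∞. -/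
/-!
By L'Hôpital's rule, `F̄(t + m(t)x) / F̄(t)` has the same limit as
`f(t + m(t)x)(1 + m'(t)x) / f(t)`, namely `e^{-x}`; here `t + m(t)x → ∞` because its derivative
tends to `1`. The ratio is antitone in `x` and the limit `e^{-x}` is continuous, so Pólya's
argument upgrades pointwise to locally uniform convergence.
-/

open Filter Topology MeasureTheory

/-- Pólya: on a short interval `[a, b]` where `G` barely varies, `g i y` is squeezed between
`g i b` and `g i a`, which converge. -/
theorem tendstoLocallyUniformly_of_antitone {ι : Type*} {l : Filter ι} {g : ι → ℝ → ℝ}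
    {G : ℝ → ℝ} (hg : ∀ i, Antitone (g i)) (hG : Continuous G)
    (h : ∀ x, Tendsto (fun i => g i x) l (𝓝 (G x))) : TendstoLocallyUniformly g G l := by
  rw [Metric.tendstoLocallyUniformly_iff]
  intro ε hε x
  obtain ⟨δ, hδ, hGx⟩ := Metric.continuousAt_iff.mp hG.continuousAt (ε / 4) (by positivity)
  set a := x - δ / 2 with ha_def
  set b := x + δ / 2 with hb_def
  have hG_near : ∀ y ∈ Set.Icc a b, |G y - G x| < ε / 4 := fun y hy => by
    rw [← Real.dist_eq]
    exact hGx (by rw [Real.dist_eq, abs_lt]; constructor <;> linarith [hy.1, hy.2])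
  refine ⟨Set.Icc a b, Icc_mem_nhds (by linarith) (by linarith), ?_⟩
  filter_upwards [Metric.tendsto_nhds.mp (h a) _ (half_pos hε),
    Metric.tendsto_nhds.mp (h b) _ (half_pos hε)] with i ha hb y hy
  have hay : g i y ≤ g i a := hg i hy.1
  have hyb : g i b ≤ g i y := hg i hy.2
  have hGa := hG_near a ⟨le_rfl, by linarith⟩
  have hGb := hG_near b ⟨by linarith, le_rfl⟩
  have hGy := hG_near y hy
  rw [Real.dist_eq] at ha hb ⊢
  rw [abs_lt] at *
  constructor <;> linarith

theorem tendsto_atTop_of_hasDerivAt_of_tendsto_pos {φ φ' : ℝ → ℝ} {L : ℝ}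
    (hφ : ∀ t, HasDerivAt φ (φ' t) t) (hφ' : Tendsto φ' atTop (𝓝 L)) (hL : 0 < L) :
    Tendsto φ atTop atTop := by
  obtain ⟨t₀, ht₀⟩ := eventually_atTop.mp (hφ'.eventually (eventually_gt_nhds (half_lt_self hL)))
  have hgrowth : ∀ t ≥ t₀, L / 2 * (t - t₀) ≤ φ t - φ t₀ := fun t ht =>
    (convex_Ici t₀).mul_sub_le_image_sub_of_le_deriv
      (fun s _ => (hφ s).continuousAt.continuousWithinAt)
      (fun s _ => (hφ s).differentiableAt.differentiableWithinAt)
      (fun s hs => by rw [(hφ s).deriv]; exact (ht₀ s (interior_subset hs)).le)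
      t₀ Set.self_mem_Ici t ht ht
  refine tendsto_atTop_mono' _ (eventually_atTop.mpr ⟨t₀, fun t ht => ?_⟩)
    (tendsto_atTop_add_const_right _ (φ t₀ - L / 2 * t₀)
      (tendsto_id.const_mul_atTop (half_pos hL)))
  have := hgrowth t ht
  simp only [id]
  linarith

theorem tendsto_comp_div_of_hasDerivAt {F F' φ φ' : ℝ → ℝ} {c : ℝ}
    (hF : ∀ t, HasDerivAt F (F' t) t) (hF0 : Tendsto F atTop (𝓝 0))
    (hφ : ∀ t, HasDerivAt φ (φ' t) t) (hφ' : Tendsto φ' atTop (𝓝 1))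
    (hF' : ∀ᶠ t in atTop, F' t ≠ 0) (hratio : Tendsto (fun t => F' (φ t) / F' t) atTop (𝓝 c)) :
    Tendsto (fun t => F (φ t) / F t) atTop (𝓝 c) := by
  have hφ_top := tendsto_atTop_of_hasDerivAt_of_tendsto_pos hφ hφ' one_pos
  refine HasDerivAt.lhopital_zero_atTop (f' := fun t => F' (φ t) * φ' t)
    (.of_forall fun t => (hF (φ t)).comp t (hφ t)) (.of_forall hF) hF' (hF0.comp hφ_top)
    hF0 ?_
  simpa only [mul_div_right_comm, mul_one] using hratio.mul hφ'

theorem hasDerivAt_integral_Ioi {f : ℝ → ℝ} {t : ℝ} (hf : Integrable f)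
    (ht : ContinuousAt f t) : HasDerivAt (fun u => ∫ s in Set.Ioi u, f s) (-f t) t := by
  have hprimitive : HasDerivAt (fun u => ∫ s in t..u, f s) (f t) t :=
    intervalIntegral.integral_hasDerivAt_right hf.intervalIntegrable
      hf.aestronglyMeasurable.stronglyMeasurableAtFilter ht
  refine (hprimitive.const_sub (∫ s in Set.Ioi t, f s)).congr_of_eventuallyEq
    (.of_forall fun u => ?_)
  simp only [← intervalIntegral.integral_Ioi_sub_Ioi' hf.integrableOn hf.integrableOn,
    sub_sub_cancel]

theorem antitone_integral_Ioi {f : ℝ → ℝ} (hf : Integrable f) (hf_nonneg : ∀ s, 0 ≤ f s) :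
    Antitone fun t => ∫ s in Set.Ioi t, f s := fun _ _ hab =>
  setIntegral_mono_set hf.integrableOn (.of_forall hf_nonneg)
    (Set.Ioi_subset_Ioi hab).eventuallyLE

theorem rapid_variation_stmt2_general (f m m' : ℝ → ℝ)
    (hf_cont : Continuous f) (hf_nonneg : ∀ t, 0 ≤ f t)
    (hf_int : Integrable f)
    (hm_pos : ∀ t, 0 < m t)
    (hm_deriv : ∀ t, HasDerivAt m (m' t) t)
    (hm_d0 : Tendsto m' atTop (𝓝 0))
    (hf_gamma : ∀ x : ℝ, Tendsto (fun t => f (t + m t * x) / f t) atTop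
        (𝓝 (Real.exp (-x)))) :
    ∀ K : Set ℝ, IsCompact K →
      TendstoUniformlyOn
        (fun t x => (∫ s in Set.Ioi (t + m t * x), f s) / (∫ s in Set.Ioi t, f s))
        (fun x => Real.exp (-x)) atTop K := by
  set F := fun t => ∫ s in Set.Ioi t, f s
  -- `f t / f t → 1` forces `f t ≠ 0` eventually, since `0 / 0 = 0`.
  have hf_ne : ∀ᶠ t in atTop, -f t ≠ 0 := by
    have h := hf_gamma 0
    simp only [mul_zero, add_zero, neg_zero, Real.exp_zero] at h
    exact (h.eventually_ne one_ne_zero).mono fun t ht h0 => ht (by simp [neg_eq_zero.mp h0])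
  have hpt : ∀ x, Tendsto (fun t => F (t + m t * x) / F t) atTop (𝓝 (Real.exp (-x))) :=
    fun x => tendsto_comp_div_of_hasDerivAt
      (fun t => hasDerivAt_integral_Ioi hf_int hf_cont.continuousAt)
      (tendsto_integral_Ioi_zero tendsto_id)
      (fun t => (hasDerivAt_id t).add ((hm_deriv t).mul_const x))
      (by simpa using (hm_d0.mul_const x).const_add 1) hf_ne
      (by simpa only [neg_div_neg_eq] using hf_gamma x)
  have hanti : ∀ t, Antitone fun x => F (t + m t * x) / F t := fun t _ _ hxy =>
    div_le_div_of_nonneg_right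
      (antitone_integral_Ioi hf_int hf_nonneg (by gcongr; exact (hm_pos t).le))
      (setIntegral_nonneg measurableSet_Ioi fun s _ => hf_nonneg s)
  exact tendstoLocallyUniformly_iff_forall_isCompact.mp
    (tendstoLocallyUniformly_of_antitone hanti (by fun_prop) hpt)

/-- If a continuous probability density `f` satisfies `f(t + m(t)x) ~ f(t)e^{-x}` for all `x`,
with `m` self-neglecting and differentiable with derivative tending to `0`, then the survival
function `F̄(t) = ∫_t^∞ f` satisfies `F̄(t + m(t)x) ~ F̄(t)e^{-x}` locally uniformly in `x`. -/
theorem rapid_variation_stmt2 (f m m' : ℝ → ℝ)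
    (hf_cont : Continuous f) (hf_nonneg : ∀ t, 0 ≤ f t)
    (hf_int : Integrable f) (hf_dens : ∫ s, f s = 1)
    (hm_pos : ∀ t, 0 < m t)
    (hm_deriv : ∀ t, HasDerivAt m (m' t) t)
    (hm_d0 : Tendsto m' atTop (𝓝 0))
    (hm_sn : ∀ K : Set ℝ, IsCompact K →
      TendstoUniformlyOn (fun t x => m (t + m t * x) / m t) (fun _ => 1) atTop K)
    (hf_gamma : ∀ x : ℝ, Tendsto (fun t => f (t + m t * x) / f t) atTop
        (𝓝 (Real.exp (-x)))) :
    ∀ K : Set ℝ, IsCompact K →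
      TendstoUniformlyOn
        (fun t x => (∫ s in Set.Ioi (t + m t * x), f s) / (∫ s in Set.Ioi t, f s))
        (fun x => Real.exp (-x)) atTop K :=
  rapid_variation_stmt2_general f m m' hf_cont hf_nonneg hf_int hm_pos hm_deriv hm_d0 hf_gamma
end

section
/- If the limit defining the upper tail density of a copula, c(1 − u w₁, …, 1 − u w_d)/(u^{κ_U − d} ℓ(u)) → λ_U(w; κ_U), holds locally uniformly for w in the box ∏_{i=1}^d (0, a_i] with a_i > 0, then it holds locally uniformly for all w ∈ (0,∞)^d. -/
open Filter Topology

/-!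
With `F u w = c (1 - u w) / (u ^ (κ - d) ℓ u)` and a scale `s ∈ (0, 1]` putting `s • K` in the box,
`F u w = s ^ (d - κ) · (ℓ (u / s) / ℓ u) · F (u / s) (s • w)`. The box limit at `s • w` and the
homogeneity `λ_U (s • w) = s ^ (κ - d) λ_U w` give the limit at `w`, up to the scalar factor
`b u = ℓ (u / s) / ℓ u → 1`. As `λ_U` need not be bounded on `K`, the uniform convergence
`b u · λ_U → λ_U` is not automatic: on `s • K` it follows by comparing the direct box limit of
`F u` with its rescaled expansion (which uses `s • s • K` in the box), and homogeneity carries it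
back to `K`.
-/

theorem tendstoUniformlyOn_iff_tendsto_sub {ι α G : Type*} [UniformSpace G] [AddGroup G]
    [IsUniformAddGroup G] {F : ι → α → G} {f : α → G} {p : Filter ι} {s : Set α} :
    TendstoUniformlyOn F f p s ↔
      Tendsto (fun q : ι × α => F q.1 q.2 - f q.2) (p ×ˢ 𝓟 s) (𝓝 0) := by
  rw [tendstoUniformlyOn_iff_tendsto, uniformity_eq_comap_nhds_zero, tendsto_comap_iff]
  rfl

section Rescaling

variable {ι α 𝕜 : Type*} [NormedField 𝕜] {p : Filter ι} {s : Set α}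
  {F G : ι → α → 𝕜} {f : α → 𝕜} {b : ι → 𝕜}

theorem TendstoUniformlyOn.rescale {ι' : Type*} {p' : Filter ι'} {F : ι' → α → 𝕜}
    {φ : ι → ι'} {T : α → α} {q : 𝕜} (hF : TendstoUniformlyOn F f p' (T '' s))
    (hφ : Tendsto φ p p') (hf : ∀ x ∈ s, q * f (T x) = f x) :
    TendstoUniformlyOn (fun i x => q * F (φ i) (T x)) f p s := by
  rw [tendstoUniformlyOn_iff_tendsto_sub] at hF ⊢
  have hmap : Tendsto (Prod.map φ T) (p ×ˢ 𝓟 s) (p' ×ˢ 𝓟 (T '' s)) :=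
    hφ.prodMap (tendsto_principal_principal.2 fun x hx => Set.mem_image_of_mem T hx)
  have hlim := (hF.comp hmap).const_mul q
  rw [mul_zero] at hlim
  refine hlim.congr' (eventually_prod_principal_iff.2 (Eventually.of_forall fun i x hx => ?_))
  simp only [Function.comp_apply, Prod.map_fst, Prod.map_snd, mul_sub, hf x hx]

theorem TendstoUniformlyOn.mul_self_of_eq_mul (hF : TendstoUniformlyOn F f p s)
    (hG : TendstoUniformlyOn G f p s) (hb : Tendsto b p (𝓝 1))
    (hFG : ∀ᶠ i in p, ∀ x, F i x = b i * G i x) :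
    TendstoUniformlyOn (fun i x => b i * f x) f p s := by
  rw [tendstoUniformlyOn_iff_tendsto_sub] at hF hG ⊢
  have hlim := hF.sub ((hb.comp tendsto_fst).mul hG)
  rw [mul_zero, sub_zero] at hlim
  refine hlim.congr' ((eventually_prod_principal_iff.2 (hFG.mono fun i hi x _ => ?_)))
  simp only [Function.comp_apply, hi x]
  ring

theorem TendstoUniformlyOn.mul_of_tendsto_one (hG : TendstoUniformlyOn G f p s)
    (hb : Tendsto b p (𝓝 1)) (hbf : TendstoUniformlyOn (fun i x => b i * f x) f p s) :
    TendstoUniformlyOn (fun i x => b i * G i x) f p s := by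
  rw [tendstoUniformlyOn_iff_tendsto_sub] at hG hbf ⊢
  have hlim := ((hb.comp tendsto_fst).mul hG).add hbf
  rw [mul_zero, zero_add] at hlim
  refine hlim.congr fun q => ?_
  simp only [Function.comp_apply]
  ring

theorem TendstoUniformlyOn.of_self_similar {φ : ι → ι} {T : α → α} {q : 𝕜}
    (hφ : Tendsto φ p p) (hb : Tendsto b p (𝓝 1))
    (hF : ∀ᶠ i in p, ∀ x, F i x = q * b i * F (φ i) (T x))
    (hf : ∀ x ∈ s ∪ T '' s, q * f (T x) = f x)
    (h₁ : TendstoUniformlyOn F f p (T '' s)) (h₂ : TendstoUniformlyOn F f p (T '' (T '' s))) :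
    TendstoUniformlyOn F f p s := by
  have hG₀ := h₁.rescale hφ fun x hx => hf x (Or.inl hx)
  have hG₁ := h₂.rescale hφ fun x hx => hf x (Or.inr hx)
  have hFG : ∀ᶠ i in p, ∀ x, F i x = b i * (q * F (φ i) (T x)) :=
    hF.mono fun i hi x => by rw [hi]; ring
  have hbf₁ := h₁.mul_self_of_eq_mul hG₁ hb hFG
  have hbf₀ : TendstoUniformlyOn (fun i x => b i * f x) f p s :=
    (hbf₁.rescale tendsto_id fun x hx => hf x (Or.inl hx)).congr <|
      Eventually.of_forall fun i x hx => by
        simp only [id, ← hf x (Or.inl hx)]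
        ring
  exact (hG₀.mul_of_tendsto_one hb hbf₀).congr (hFG.mono fun i hi x _ => (hi x).symm)

end Rescaling

noncomputable def tailQuotient {ι : Type*} (c : (ι → ℝ) → ℝ) (ℓ : ℝ → ℝ) (e u : ℝ)
    (w : ι → ℝ) : ℝ :=
  c (fun i => 1 - u * w i) / (u ^ e * ℓ u)

theorem tailQuotient_eq_rescaled {ι : Type*} (c : (ι → ℝ) → ℝ) (ℓ : ℝ → ℝ) (e : ℝ) {u s : ℝ}
    (hu : 0 ≤ u) (hs : 0 < s) (hℓ : ℓ (u * s⁻¹) ≠ 0) (w : ι → ℝ) :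
    tailQuotient c ℓ e u w =
      (s ^ e)⁻¹ * (ℓ (u * s⁻¹) / ℓ u) * tailQuotient c ℓ e (u * s⁻¹) (s • w) := by
  have harg : (fun i => 1 - u * s⁻¹ * (s • w) i) = fun i => 1 - u * w i := by
    funext i
    simp only [Pi.smul_apply, smul_eq_mul]
    field_simp
  have hse : s ^ e ≠ 0 := (Real.rpow_pos_of_pos hs e).ne'
  rw [← div_eq_mul_inv] at hℓ
  simp only [tailQuotient, harg, Real.mul_rpow hu (inv_nonneg.2 hs.le), Real.inv_rpow hs.le]
  field_simp

theorem IsCompact.exists_smul_le {ι : Type*} [Fintype ι] {K : Set (ι → ℝ)} (hK : IsCompact K)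
    {a : ι → ℝ} (ha : ∀ i, 0 < a i) : ∃ s, 0 < s ∧ s ≤ 1 ∧ ∀ w ∈ K, ∀ i, s * w i ≤ a i := by
  obtain ⟨R, hR⟩ := hK.exists_bound_of_continuousOn (f := fun w i => w i / a i) (by fun_prop)
  refine ⟨(max R 1)⁻¹, by positivity, inv_le_one_of_one_le₀ (le_max_right _ _),
    fun w hw i => ?_⟩
  have hwi : w i / a i ≤ max R 1 :=
    ((le_abs_self _).trans ((norm_le_pi_norm (fun i => w i / a i) i).trans (hR w hw))).trans
      (le_max_left _ _)
  rw [div_le_iff₀ (ha i)] at hwi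
  exact (inv_mul_le_iff₀ (by positivity)).2 hwi

theorem rapid_variation_stmt7_general (d : ℕ) (c : (Fin d → ℝ) → ℝ) (ℓ : ℝ → ℝ)
    (κ : ℝ)
    (a : Fin d → ℝ) (ha : ∀ i, 0 < a i)
    (lamU : (Fin d → ℝ) → ℝ)
    (hscale : ∀ t > 0, ∀ w : Fin d → ℝ, (∀ i, 0 < w i) →
      lamU (t • w) = t ^ (κ - (d:ℝ)) * lamU w)
    (hℓ_pos : ∀ u > 0, 0 < ℓ u)
    (hℓ : ∀ K : Set ℝ, IsCompact K → K ⊆ Set.Ioi 0 →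
      TendstoUniformlyOn (fun u x => ℓ (u * x) / ℓ u) (fun _ => 1) (𝓝[>] (0:ℝ)) K)
    (hbox : ∀ K : Set (Fin d → ℝ), IsCompact K →
      K ⊆ {w | ∀ i, 0 < w i ∧ w i ≤ a i} →
      TendstoUniformlyOn
        (fun u w => c (fun i => 1 - u * w i) / (u ^ (κ - (d:ℝ)) * ℓ u))
        lamU (𝓝[>] (0:ℝ)) K) :
    ∀ K : Set (Fin d → ℝ), IsCompact K → K ⊆ {w | ∀ i, 0 < w i} →
      TendstoUniformlyOn
        (fun u w => c (fun i => 1 - u * w i) / (u ^ (κ - (d:ℝ)) * ℓ u))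
        lamU (𝓝[>] (0:ℝ)) K := by
  intro K hK hKpos
  obtain ⟨s, hs, hs1, hsK⟩ := hK.exists_smul_le ha
  have hK₁ : (s • ·) '' K ⊆ {w | ∀ i, 0 < w i ∧ w i ≤ a i} := by
    rintro _ ⟨w, hw, rfl⟩ i
    exact ⟨mul_pos hs (hKpos hw i), hsK w hw i⟩
  have hK₂ : (s • ·) '' ((s • ·) '' K) ⊆ {w | ∀ i, 0 < w i ∧ w i ≤ a i} := by
    rintro _ ⟨v, hv, rfl⟩ i
    obtain ⟨hpos, hle⟩ := hK₁ hv i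
    exact ⟨mul_pos hs hpos, (mul_le_of_le_one_left hpos.le hs1).trans hle⟩
  have hφ : Tendsto (· * s⁻¹) (𝓝[>] (0:ℝ)) (𝓝[>] 0) :=
    (tendsto_iff_comap.2 (comap_mulLeft_nhdsGT_zero (inv_pos.2 hs)).ge).congr fun _ =>
      mul_comm _ _
  have hb : Tendsto (fun u => ℓ (u * s⁻¹) / ℓ u) (𝓝[>] 0) (𝓝 1) :=
    (hℓ {s⁻¹} isCompact_singleton (by simpa using hs)).tendsto_at rfl
  have hrescale : ∀ᶠ u in 𝓝[>] (0:ℝ), ∀ w, tailQuotient c ℓ (κ - d) u w =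
      (s ^ (κ - d))⁻¹ * (ℓ (u * s⁻¹) / ℓ u) * tailQuotient c ℓ (κ - d) (u * s⁻¹) (s • w) := by
    filter_upwards [self_mem_nhdsWithin] with u hu
    exact tailQuotient_eq_rescaled c ℓ _ hu.le hs (hℓ_pos _ (mul_pos hu (inv_pos.2 hs))).ne'
  have hlamU : ∀ w ∈ K ∪ (s • ·) '' K, (s ^ (κ - d))⁻¹ * lamU (s • w) = lamU w := by
    intro w hw
    have hwpos : ∀ i, 0 < w i := by
      rcases hw with hw | ⟨v, hv, rfl⟩
      exacts [hKpos hw, fun i => mul_pos hs (hKpos hv i)]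
    rw [hscale s hs w hwpos, inv_mul_cancel_left₀ (Real.rpow_pos_of_pos hs _).ne']
  exact TendstoUniformlyOn.of_self_similar hφ hb hrescale hlamU
    (hbox _ (hK.image (continuous_const_smul s)) hK₁)
    (hbox _ ((hK.image (continuous_const_smul s)).image (continuous_const_smul s)) hK₂)

/-- If the copula upper tail density limit holds locally uniformly on a box
`∏ (0, aᵢ]`, then it holds locally uniformly on all of `(0,∞)^d`. -/
theorem rapid_variation_stmt7 (d : ℕ) (c : (Fin d → ℝ) → ℝ) (ℓ : ℝ → ℝ)
    (κ : ℝ) (hκ : 1 ≤ κ)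
    (a : Fin d → ℝ) (ha : ∀ i, 0 < a i)
    (lamU : (Fin d → ℝ) → ℝ)
    (hscale : ∀ t > 0, ∀ w : Fin d → ℝ, (∀ i, 0 < w i) →
      lamU (t • w) = t ^ (κ - (d:ℝ)) * lamU w)
    (hℓ_pos : ∀ u > 0, 0 < ℓ u)
    (hℓ : ∀ K : Set ℝ, IsCompact K → K ⊆ Set.Ioi 0 →
      TendstoUniformlyOn (fun u x => ℓ (u * x) / ℓ u) (fun _ => 1) (𝓝[>] (0:ℝ)) K)
    (hbox : ∀ K : Set (Fin d → ℝ), IsCompact K →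
      K ⊆ {w | ∀ i, 0 < w i ∧ w i ≤ a i} →
      TendstoUniformlyOn
        (fun u w => c (fun i => 1 - u * w i) / (u ^ (κ - (d:ℝ)) * ℓ u))
        lamU (𝓝[>] (0:ℝ)) K) :
    ∀ K : Set (Fin d → ℝ), IsCompact K → K ⊆ {w | ∀ i, 0 < w i} →
      TendstoUniformlyOn
        (fun u w => c (fun i => 1 - u * w i) / (u ^ (κ - (d:ℝ)) * ℓ u))
        lamU (𝓝[>] (0:ℝ)) K :=
  rapid_variation_stmt7_general d c ℓ κ a ha lamU hscale hℓ_pos hℓ hbox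
end
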